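/- Let a, b > 0 and c₁, c₂ ∈ ℝ with |c₂| ≥ |c₁|. For μ_s ∈ (0,1], μ ∈ (0,1], φ ∈ [0,2π), define σ_M = (1/(2 μ μ_s)) [[1 + κ_s cos φ, -κ_s sin φ], [-κ_s sin φ, 1 - κ_s cos φ]], κ_s = sqrt(1 - μ_s²). Then the largest eigenvalue of diag(c₁,c₂)ᵀ (b·I₂ + σ_M)⁻¹ diag(c₁,c₂) over all such σ_M has supremum c₂²/b, attained in the limit μ_s → 0 with φ = 0. -/

import Mathlib

/-!
For a 2×2 matrix `M`, `maxEig M ≤ λ` as soon as `trace M ≤ 2λ` and the characteristic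
polynomial `λ² - λ trace M + det M` is nonnegative at `λ`. For `M = D (b + S)⁻¹ D` with
`D = diag(c₁, c₂)`, `c₁² ≤ c₂²` and `S` positive semidefinite, both conditions at `λ = c₂²/b`
become, after clearing the denominator `det (b + S)`, sums of manifestly nonnegative terms;
`σ_M` is such an `S`, which gives the upper bound. At `φ = 0` everything is diagonal, so
`maxEig M ≥ c₂² / (b + (1 - √(1 - μs²)) / (2 μ μs))`, and this tends to `c₂²/b` as `μs → 0⁺`
because `1 - √(1 - x²) ≤ x²`.
-/

open Matrix Real Filter

noncomputable section

/-- Largest eigenvalue of a (symmetric) 2×2 real matrix via trace/determinant. -/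
def maxEig (M : Matrix (Fin 2) (Fin 2) ℝ) : ℝ :=
  (M.trace + Real.sqrt (M.trace ^ 2 - 4 * M.det)) / 2

/-- General Gaussian measurement covariance matrix with purity `μ`, squeezing `μs`,
phase `φ`. -/
def measCM (μ μs φ : ℝ) : Matrix (Fin 2) (Fin 2) ℝ :=
  (1 / (2 * μ * μs)) •
    !![1 + Real.sqrt (1 - μs ^ 2) * Real.cos φ, -(Real.sqrt (1 - μs ^ 2) * Real.sin φ);
       -(Real.sqrt (1 - μs ^ 2) * Real.sin φ), 1 - Real.sqrt (1 - μs ^ 2) * Real.cos φ]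

open Topology

section

variable {M : Matrix (Fin 2) (Fin 2) ℝ} {b c₁ c₂ : ℝ} {S : Matrix (Fin 2) (Fin 2) ℝ}

lemma maxEig_le_of_trace_le {l : ℝ} (htr : M.trace ≤ 2 * l)
    (hchar : 0 ≤ l ^ 2 - l * M.trace + M.det) : maxEig M ≤ l := by
  have : √(M.trace ^ 2 - 4 * M.det) ≤ 2 * l - M.trace :=
    Real.sqrt_le_iff.mpr ⟨by linarith, by nlinarith⟩
  unfold maxEig
  linarith

lemma apply_one_one_le_maxEig (hM : M 1 0 = M 0 1) : M 1 1 ≤ maxEig M := by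
  have : M 1 1 - M 0 0 ≤ √(M.trace ^ 2 - 4 * M.det) := by
    refine Real.le_sqrt_of_sq_le ?_
    rw [trace_fin_two, det_fin_two, hM]
    nlinarith [sq_nonneg (M 0 1)]
  unfold maxEig
  rw [trace_fin_two] at this ⊢
  linarith

lemma diagonal_mul_inv_mul_diagonal (c₁ c₂ p q t : ℝ) :
    diagonal ![c₁, c₂] * !![p, t; t, q]⁻¹ * diagonal ![c₁, c₂] =
      (p * q - t ^ 2)⁻¹ • !![c₁ ^ 2 * q, -(c₁ * c₂ * t); -(c₁ * c₂ * t), c₂ ^ 2 * p] := by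
  rw [inv_def, adjugate_fin_two_of, det_fin_two_of, Ring.inverse_eq_inv]
  ext i j
  fin_cases i <;> fin_cases j <;>
    simp only [Fin.zero_eta, Fin.mk_one, Matrix.smul_apply, of_apply, cons_val', cons_val_zero,
      cons_val_one, cons_val_fin_one, smul_eq_mul, diagonal_mul, mul_diagonal] <;> ring

lemma smul_one_add_eq_fin_two (b : ℝ) (hS : S 1 0 = S 0 1) :
    b • 1 + S = !![b + S 0 0, S 0 1; S 0 1, b + S 1 1] := by
  rw [eta_fin_two S, hS]
  ext i j
  fin_cases i <;> fin_cases j <;> simp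

lemma maxEig_diagonal_mul_inv_mul_diagonal_le (hb : 0 < b) (hc : c₁ ^ 2 ≤ c₂ ^ 2)
    (hS : S 1 0 = S 0 1) (h₀ : 0 ≤ S 0 0) (h₁ : 0 ≤ S 1 1) (hdet : 0 ≤ S.det) :
    maxEig (diagonal ![c₁, c₂] * (b • 1 + S)⁻¹ * diagonal ![c₁, c₂]) ≤ c₂ ^ 2 / b := by
  rw [det_fin_two, hS] at hdet
  rw [smul_one_add_eq_fin_two b hS, diagonal_mul_inv_mul_diagonal]
  generalize S 0 0 = s₁ at *
  generalize S 1 1 = s₂ at *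
  generalize S 0 1 = t at *
  obtain ⟨d, hd_def⟩ : ∃ d, d = (b + s₁) * (b + s₂) - t ^ 2 := ⟨_, rfl⟩
  rw [← hd_def]
  have hd : 0 < d := by nlinarith [mul_nonneg hb.le h₀]
  have hc' : 0 ≤ (c₂ ^ 2 - c₁ ^ 2) * b := mul_nonneg (sub_nonneg.2 hc) hb.le
  apply maxEig_le_of_trace_le
  · have key : 2 * c₂ ^ 2 * d - (c₁ ^ 2 * (b + s₂) + c₂ ^ 2 * (b + s₁)) * b =
        (c₂ ^ 2 - c₁ ^ 2) * b * (b + s₂) + c₂ ^ 2 * b * (s₁ + s₂) +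
          2 * c₂ ^ 2 * (s₁ * s₂ - t * t) := by
      rw [hd_def]; ring
    rw [trace_smul, trace_fin_two_of, smul_eq_mul, inv_mul_eq_div, mul_div_assoc',
      div_le_div_iff₀ hd hb]
    nlinarith [mul_nonneg hc' (by positivity : 0 ≤ b + s₂), mul_nonneg (sq_nonneg c₂) hb.le]
  · have hdet' : c₁ ^ 2 * (b + s₂) * (c₂ ^ 2 * (b + s₁)) - -(c₁ * c₂ * t) * -(c₁ * c₂ * t) =
        c₁ ^ 2 * c₂ ^ 2 * d := by
      rw [hd_def]; ring
    have key : c₂ ^ 2 * d - b * (c₁ ^ 2 * (b + s₂) + c₂ ^ 2 * (b + s₁)) + b ^ 2 * c₁ ^ 2 =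
        (c₂ ^ 2 - c₁ ^ 2) * b * s₂ + c₂ ^ 2 * (s₁ * s₂ - t * t) := by
      rw [hd_def]; ring
    have hid : (c₂ ^ 2 / b) ^ 2 - c₂ ^ 2 / b * (d⁻¹ * (c₁ ^ 2 * (b + s₂) + c₂ ^ 2 * (b + s₁))) +
        d⁻¹ ^ 2 * (c₁ ^ 2 * c₂ ^ 2 * d) =
        c₂ ^ 2 * ((c₂ ^ 2 - c₁ ^ 2) * b * s₂ + c₂ ^ 2 * (s₁ * s₂ - t * t)) / (b ^ 2 * d) := by
      rw [← key]; field_simp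
    rw [trace_smul, trace_fin_two_of, det_smul, det_fin_two_of, Fintype.card_fin, hdet',
      smul_eq_mul, hid]
    have := mul_nonneg hc' h₁
    positivity

lemma sq_div_le_maxEig_diagonal_mul_inv_mul_diagonal (hS₁₀ : S 1 0 = 0) (hS₀₁ : S 0 1 = 0)
    (h₀ : b + S 0 0 ≠ 0) :
    c₂ ^ 2 / (b + S 1 1) ≤ maxEig (diagonal ![c₁, c₂] * (b • 1 + S)⁻¹ * diagonal ![c₁, c₂]) := by
  rw [smul_one_add_eq_fin_two b (hS₁₀.trans hS₀₁.symm), diagonal_mul_inv_mul_diagonal, hS₀₁]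
  refine le_trans (le_of_eq ?_) (apply_one_one_le_maxEig (by simp))
  simp only [Matrix.smul_apply, of_apply, cons_val', cons_val_one, cons_val_fin_one, smul_eq_mul,
    ne_eq, OfNat.ofNat_ne_zero, not_false_eq_true, zero_pow, sub_zero]
  rw [← div_eq_inv_mul, mul_comm (c₂ ^ 2), mul_div_mul_left _ _ h₀]

lemma one_sub_sqrt_one_sub_sq_le (x : ℝ) : 1 - √(1 - x ^ 2) ≤ x ^ 2 := by
  rcases le_total (1 - x ^ 2) 0 with h | h
  · linarith [Real.sqrt_nonneg (1 - x ^ 2)]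
  · linarith [Real.le_sqrt_of_sq_le (show (1 - x ^ 2) ^ 2 ≤ 1 - x ^ 2 by nlinarith)]

lemma tendsto_one_sub_sqrt_one_sub_sq_div {c : ℝ} (hc : 0 < c) :
    Tendsto (fun x => (1 - √(1 - x ^ 2)) / (c * x)) (𝓝[>] 0) (𝓝 0) := by
  have hupper : Tendsto (fun x => x / c) (𝓝[>] 0) (𝓝 0) := by
    simpa using ((tendsto_id (x := 𝓝 (0 : ℝ))).div_const c).mono_left nhdsWithin_le_nhds
  refine tendsto_of_tendsto_of_tendsto_of_le_of_le' tendsto_const_nhds hupper ?_ ?_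
  · filter_upwards [self_mem_nhdsWithin] with x (hx : 0 < x)
    have : √(1 - x ^ 2) ≤ 1 := Real.sqrt_le_one.2 (by nlinarith)
    exact div_nonneg (by linarith) (by positivity)
  · filter_upwards [self_mem_nhdsWithin] with x (hx : 0 < x)
    rw [div_le_div_iff₀ (by positivity) hc]
    nlinarith [one_sub_sqrt_one_sub_sq_le x]

variable {μ μs φ : ℝ}

lemma measCM_apply_one_zero : measCM μ μs φ 1 0 = measCM μ μs φ 0 1 := by
  simp [measCM]

lemma measCM_apply_self_nonneg (hμ : 0 ≤ μ) (hμs : 0 ≤ μs) (i : Fin 2) :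
    0 ≤ measCM μ μs φ i i := by
  have hκ : √(1 - μs ^ 2) * |cos φ| ≤ 1 :=
    mul_le_one₀ (Real.sqrt_le_one.2 (by nlinarith)) (abs_nonneg _) (abs_cos_le_one φ)
  have := neg_abs_le (cos φ)
  have := le_abs_self (cos φ)
  have := Real.sqrt_nonneg (1 - μs ^ 2)
  fin_cases i <;>
    simp only [measCM, Fin.zero_eta, Fin.mk_one, Matrix.smul_apply, of_apply, cons_val',
      cons_val_zero, cons_val_one, cons_val_fin_one, smul_eq_mul] <;>
    exact mul_nonneg (by positivity) (by nlinarith)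

lemma det_measCM_nonneg : 0 ≤ (measCM μ μs φ).det := by
  have hκ₀ := Real.sqrt_nonneg (1 - μs ^ 2)
  have hκ₁ : √(1 - μs ^ 2) ≤ 1 := Real.sqrt_le_one.2 (by nlinarith)
  have hdet : (1 + √(1 - μs ^ 2) * cos φ) * (1 - √(1 - μs ^ 2) * cos φ) -
      -(√(1 - μs ^ 2) * sin φ) * -(√(1 - μs ^ 2) * sin φ) = 1 - √(1 - μs ^ 2) ^ 2 := by
    linear_combination (-(√(1 - μs ^ 2) ^ 2)) * cos_sq_add_sin_sq φ
  rw [measCM, det_smul, det_fin_two_of, Fintype.card_fin, hdet]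
  exact mul_nonneg (by positivity) (by nlinarith)

lemma measCM_zero_apply_one_one : measCM μ μs 0 1 1 = (1 - √(1 - μs ^ 2)) / (2 * μ * μs) := by
  simp [measCM, div_eq_inv_mul]

lemma maxEig_measCM_le (hb : 0 < b) (hc : c₁ ^ 2 ≤ c₂ ^ 2) (hμ : 0 ≤ μ) (hμs : 0 ≤ μs) :
    maxEig (diagonal ![c₁, c₂] * (b • 1 + measCM μ μs φ)⁻¹ * diagonal ![c₁, c₂]) ≤ c₂ ^ 2 / b :=
  maxEig_diagonal_mul_inv_mul_diagonal_le hb hc measCM_apply_one_zero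
    (measCM_apply_self_nonneg hμ hμs 0) (measCM_apply_self_nonneg hμ hμs 1) det_measCM_nonneg

lemma tendsto_maxEig_measCM_zero (hb : 0 < b) (hc : c₁ ^ 2 ≤ c₂ ^ 2) (hμ : 0 < μ) :
    Tendsto (fun μs => maxEig (diagonal ![c₁, c₂] * (b • 1 + measCM μ μs 0)⁻¹ *
      diagonal ![c₁, c₂])) (𝓝[>] 0) (𝓝 (c₂ ^ 2 / b)) := by
  have hlower : Tendsto (fun μs => c₂ ^ 2 / (b + measCM μ μs 0 1 1)) (𝓝[>] 0)
      (𝓝 (c₂ ^ 2 / b)) := by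
    simp_rw [measCM_zero_apply_one_one]
    have h := (tendsto_one_sub_sqrt_one_sub_sq_div (by positivity : 0 < 2 * μ)).const_add b
    rw [add_zero] at h
    exact tendsto_const_nhds.div h hb.ne'
  refine tendsto_of_tendsto_of_tendsto_of_le_of_le' hlower tendsto_const_nhds ?_ ?_
  · filter_upwards [self_mem_nhdsWithin] with μs (hμs : 0 < μs)
    refine sq_div_le_maxEig_diagonal_mul_inv_mul_diagonal (by simp [measCM]) (by simp [measCM]) ?_
    have := measCM_apply_self_nonneg (φ := 0) hμ.le hμs.le 0
    positivity
  · filter_upwards [self_mem_nhdsWithin] with μs (hμs : 0 < μs)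
    exact maxEig_measCM_le hb hc hμ.le hμs.le

end

theorem sup_maxEig_eq_and_tendsto_general (b c₁ c₂ : ℝ) (hb : 0 < b)
    (hc : |c₁| ≤ |c₂|) :
    IsLUB
      {x : ℝ | ∃ μ ∈ Set.Ioc (0 : ℝ) 1, ∃ μs ∈ Set.Ioc (0 : ℝ) 1,
        ∃ φ ∈ Set.Ico (0 : ℝ) (2 * Real.pi),
          x = maxEig ((Matrix.diagonal ![c₁, c₂])ᵀ *
            (b • (1 : Matrix (Fin 2) (Fin 2) ℝ) + measCM μ μs φ)⁻¹ *
              Matrix.diagonal ![c₁, c₂])}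
      (c₂ ^ 2 / b) ∧
    ∀ μ ∈ Set.Ioc (0 : ℝ) 1,
      Tendsto
        (fun μs : ℝ =>
          maxEig ((Matrix.diagonal ![c₁, c₂])ᵀ *
            (b • (1 : Matrix (Fin 2) (Fin 2) ℝ) + measCM μ μs 0)⁻¹ *
              Matrix.diagonal ![c₁, c₂]))
        (nhdsWithin 0 (Set.Ioi 0)) (nhds (c₂ ^ 2 / b)) := by
  have hc' : c₁ ^ 2 ≤ c₂ ^ 2 := sq_le_sq.2 hc
  simp only [diagonal_transpose]
  refine ⟨⟨?_, fun y hy => ?_⟩, fun μ hμ => tendsto_maxEig_measCM_zero hb hc' hμ.1⟩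
  · rintro _ ⟨μ, hμ, μs, hμs, φ, -, rfl⟩
    exact maxEig_measCM_le hb hc' hμ.1.le hμs.1.le
  · refine le_of_tendsto (tendsto_maxEig_measCM_zero hb hc' one_pos) ?_
    filter_upwards [Ioc_mem_nhdsGT one_pos] with μs hμs
    exact hy ⟨1, ⟨one_pos, le_rfl⟩, μs, hμs, 0, ⟨le_rfl, by positivity⟩, rfl⟩

/-- for `a, b > 0`, `|c₂| ≥ |c₁|`, the largest eigenvalue of
`diag(c₁,c₂)ᵀ (b·I₂ + σM)⁻¹ diag(c₁,c₂)` over all measurement covariances `σM`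
(with `μ, μs ∈ (0,1]`, `φ ∈ [0,2π)`) has supremum `c₂²/b`, attained in the limit
`μs → 0⁺` at `φ = 0`. -/
theorem sup_maxEig_eq_and_tendsto (a b c₁ c₂ : ℝ) (ha : 0 < a) (hb : 0 < b)
    (hc : |c₁| ≤ |c₂|) :
    IsLUB
      {x : ℝ | ∃ μ ∈ Set.Ioc (0 : ℝ) 1, ∃ μs ∈ Set.Ioc (0 : ℝ) 1,
        ∃ φ ∈ Set.Ico (0 : ℝ) (2 * Real.pi),
          x = maxEig ((Matrix.diagonal ![c₁, c₂])ᵀ *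
            (b • (1 : Matrix (Fin 2) (Fin 2) ℝ) + measCM μ μs φ)⁻¹ *
              Matrix.diagonal ![c₁, c₂])}
      (c₂ ^ 2 / b) ∧
    ∀ μ ∈ Set.Ioc (0 : ℝ) 1,
      Tendsto
        (fun μs : ℝ =>
          maxEig ((Matrix.diagonal ![c₁, c₂])ᵀ *
            (b • (1 : Matrix (Fin 2) (Fin 2) ℝ) + measCM μ μs 0)⁻¹ *
              Matrix.diagonal ![c₁, c₂]))
        (nhdsWithin 0 (Set.Ioi 0)) (nhds (c₂ ^ 2 / b)) :=
  sup_maxEig_eq_and_tendsto_general b c₁ c₂ hb hc
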